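/- For every 2^1-map with p+1 edges (p prime) there exists a unique canonical model: a Belyi function β taking value 0 at all white vertices and 1 at all black vertices, such that the sum of the coordinates of white vertices of degree > 1 is 0 and the sum of the coordinates of black vertices of degree > 1 is 1. Moreover, an affine change of coordinate transforms any normalized model into the canonical model and preserves valuations of differences: v_ρ(x̃_i − x̃_j) = v_ρ(x_i − x_j). -/

import Mathlib

open Polynomial

/-- A normalized model (with respect to a valuation `v` over the prime `p`) of
a `2¹`-map with `p+1` edges, `n+1` white vertices with coordinates `x i` and
degrees `k i`, and `m+1` black vertices with coordinates `y j` and degrees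
`l j`; `c` is the pole and `r` the second critical value of the Belyi
function `β = ∏ (z - x i)^{k i} / (r (z - c))`. -/
structure NormalizedModel {K : Type*} [Field K] (v : AddValuation K (WithTop ℝ))
    (p n m : ℕ) where
  x : Fin (n + 1) → K
  k : Fin (n + 1) → ℕ
  y : Fin (m + 1) → K
  l : Fin (m + 1) → ℕ
  c : K
  r : K
  hx_inj : Function.Injective x
  hy_inj : Function.Injective y
  hk_pos : ∀ i, 0 < k i
  hl_pos : ∀ j, 0 < l j
  hk_sum : ∑ i, k i = p + 1
  hl_sum : ∑ j, l j = p + 1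
  hnm : n + m = p - 1
  belyi : (∏ i, (X - C (x i)) ^ k i) - C r * (X - C c)
      = ∏ j, (X - C (y j)) ^ l j
  white0 : ∃ i, x i = 0 ∧ 1 < k i
  black1 : ∃ j, y j = 1 ∧ 1 < l j
  integral_x : ∀ i, 0 ≤ v (x i)
  integral_y : ∀ j, 0 ≤ v (y j)
  integral_c : 0 ≤ v c
  white_I : ∀ i₁ i₂, ¬ (0 < v (x i₁)) → ¬ (0 < v (x i₂)) → i₁ = i₂
  white_exc : ∀ i, ¬ (0 < v (x i)) → k i = 1
  black_I : ∀ j₁ j₂, ¬ (0 < v (y j₁ - 1)) → ¬ (0 < v (y j₂ - 1)) → j₁ = j₂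
  black_exc : ∀ j, ¬ (0 < v (y j - 1)) → l j = 1

/-!
Let `N` and `M` be the numbers of white and black vertices of degree `> 1`, and `S`, `T` the
sums of their coordinates. The canonical model is reached by `z ↦ a z + b` exactly when
`a S + N b = 0` and `a T + M b = 1`. In a normalized model these vertices lie in the residue
classes of `0` and `1`, so `S ≡ 0` and `T ≡ M`, and the determinant `S M - T N` is congruent to
`-N M`. Since `1 ≤ N, M ≤ (p + 1) / 2 < p`, both are prime to `p`, hence units. So the system
has a unique solution, and its `a = -N / (S M - T N)` is a unit, which preserves the valuations
of differences.
-/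

open Finset

lemma sum_mul_add_const {ι K : Type*} [CommSemiring K] (s : Finset ι) (x : ι → K) (a b : K) :
    ∑ i ∈ s, (a * x i + b) = a * ∑ i ∈ s, x i + #s * b := by
  rw [sum_add_distrib, ← mul_sum, sum_const, nsmul_eq_mul]

lemma two_mul_card_filter_one_lt_le_sum {ι : Type*} (s : Finset ι) (k : ι → ℕ) :
    2 * #(s.filter (1 < k ·)) ≤ ∑ i ∈ s, k i :=
  calc 2 * #(s.filter (1 < k ·)) ≤ ∑ i ∈ s.filter (1 < k ·), k i := by
        rw [mul_comm, ← smul_eq_mul]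
        exact card_nsmul_le_sum _ _ _ fun i hi => (mem_filter.1 hi).2
    _ ≤ ∑ i ∈ s, k i := sum_le_sum_of_subset (filter_subset _ _)

lemma affine_system_iff {K : Type*} [Field K] {S T N M a b : K} (hdet : S * M - T * N ≠ 0) :
    a * S + N * b = 0 ∧ a * T + M * b = 1 ↔
      a = -N / (S * M - T * N) ∧ b = S / (S * M - T * N) := by
  constructor
  · rintro ⟨h₁, h₂⟩
    rw [eq_div_iff hdet, eq_div_iff hdet]
    constructor
    · linear_combination M * h₁ - N * h₂
    · linear_combination -T * h₁ + S * h₂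
  · rintro ⟨rfl, rfl⟩
    constructor
    · field_simp
      ring
    · rw [div_mul_eq_mul_div, mul_div_assoc', ← add_div, div_eq_one_iff_eq hdet]
      ring

namespace AddValuation

section Ring

variable {R Γ : Type*} [LinearOrderedAddCommMonoidWithTop Γ] [Ring R] (v : AddValuation R Γ)

lemma map_natCast_nonneg (N : ℕ) : 0 ≤ v N := by
  induction N with
  | zero => simp
  | succ n ih =>
    push_cast
    exact v.map_le_add ih (by simp)

lemma map_intCast_nonneg (z : ℤ) : 0 ≤ v z := by
  obtain ⟨N, rfl | rfl⟩ := z.eq_nat_or_neg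
  · exact_mod_cast v.map_natCast_nonneg N
  · push_cast
    rw [v.map_neg]
    exact v.map_natCast_nonneg N

lemma map_natCast_eq_zero_of_not_dvd {p N : ℕ} (hp : p.Prime) (hvp : 0 < v p)
    (hN : ¬ p ∣ N) : v N = 0 := by
  refine (v.map_natCast_nonneg N).antisymm' (not_lt.1 fun hvN => ?_)
  obtain ⟨u, w, huw⟩ := Nat.isCoprime_iff_coprime.2 (hp.coprime_iff_not_dvd.2 hN)
  have hK : (u : R) * p + w * N = 1 := by exact_mod_cast congrArg (Int.cast : ℤ → R) huw
  have hpos : 0 < v ((u : R) * p + w * N) := by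
    refine v.map_lt_add ?_ ?_ <;> rw [v.map_mul]
    · exact lt_add_of_nonneg_of_lt (v.map_intCast_nonneg u) hvp
    · exact lt_add_of_nonneg_of_lt (v.map_intCast_nonneg w) hvN
  rw [hK, v.map_one] at hpos
  exact hpos.false

lemma map_affine_sub_affine {a : R} (ha : v a = 0) (b x y : R) :
    v ((a * x + b) - (a * y + b)) = v (x - y) := by
  rw [add_sub_add_right_eq_sub, ← mul_sub, v.map_mul, ha, zero_add]

lemma map_card_filter_one_lt_eq_zero {ι : Type*} [Fintype ι] {p : ℕ} (hp : p.Prime)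
    (hvp : 0 < v p) (k : ι → ℕ) (hk : ∑ i, k i = p + 1) (hne : ∃ i, 1 < k i) :
    v (#(univ.filter (1 < k ·)) : R) = 0 := by
  refine v.map_natCast_eq_zero_of_not_dvd hp hvp fun hdvd => ?_
  obtain ⟨i, hi⟩ := hne
  have hpos : 0 < #(univ.filter (1 < k ·)) := card_pos.2 ⟨i, mem_filter.2 ⟨mem_univ i, hi⟩⟩
  have hcard := two_mul_card_filter_one_lt_le_sum univ k
  have hp_le := Nat.le_of_dvd hpos hdvd
  have := hp.two_le
  omega

end Ring

section CommRing

variable {R Γ : Type*} [LinearOrderedAddCommMonoidWithTop Γ] [CommRing R] (v : AddValuation R Γ)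

lemma map_mul_sub_mul_eq_zero {S T N M : R} (hS : 0 < v S) (hT : 0 < v (T - M))
    (hN : v N = 0) (hM : v M = 0) : v (S * M - T * N) = 0 := by
  have hsmall : 0 < v (S * M - (T - M) * N) := by
    rw [sub_eq_add_neg]
    refine v.map_lt_add ?_ ?_ <;> simpa [v.map_mul, hN, hM]
  have hdet : S * M - T * N = -(N * M) + (S * M - (T - M) * N) := by ring
  rw [hdet, v.map_add_eq_of_lt_left, v.map_neg, v.map_mul, hN, hM, zero_add]
  simpa [v.map_mul, hN, hM] using hsmall

end CommRing

section Field

variable {K Γ : Type*} [LinearOrderedAddCommGroupWithTop Γ] [Field K] (v : AddValuation K Γ)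

theorem exists_unique_affine_normalization {ι κ : Type*} (s : Finset ι) (t : Finset κ)
    (x : ι → K) (y : κ → K) (hs : v (#s : K) = 0) (ht : v (#t : K) = 0)
    (hx : ∀ i ∈ s, 0 < v (x i)) (hy : ∀ j ∈ t, 0 < v (y j - 1)) :
    ∃ a b : K, v a = 0 ∧ ∀ a' b' : K,
      (∑ i ∈ s, (a' * x i + b') = 0 ∧ ∑ j ∈ t, (a' * y j + b') = 1 ↔ a' = a ∧ b' = b) := by
  have hS : 0 < v (∑ i ∈ s, x i) := v.map_lt_sum' (by simp) hx
  have hT : 0 < v (∑ j ∈ t, y j - #t) := by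
    simpa [sum_sub_distrib] using v.map_lt_sum' (by simp) hy
  have hdet := v.map_mul_sub_mul_eq_zero hS hT hs ht
  have hdet₀ : (∑ i ∈ s, x i) * #t - (∑ j ∈ t, y j) * #s ≠ 0 := by
    rw [← v.ne_top_iff, hdet]
    simp
  refine ⟨_, _, ?_, fun a' b' => by
    simpa only [sum_mul_add_const] using affine_system_iff hdet₀⟩
  rw [v.map_div, v.map_neg, hs, hdet, sub_zero]

end Field

end AddValuation

/-- for every `2¹`-map with `p+1` edges (given by a normalized
model) there exists a unique canonical model: an affine change of coordinate
`z ↦ a·z + b` after which the sum of the coordinates of white vertices of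
degree `> 1` is `0` and the sum of the coordinates of black vertices of
degree `> 1` is `1` (the Belyi function still takes value `0` at white and
`1` at black vertices); moreover the change preserves valuations of
differences: `v(x̃ᵢ − x̃ⱼ) = v(xᵢ − xⱼ)`. -/
theorem stmt15 {K : Type*} [Field K] (v : AddValuation K (WithTop ℝ))
    (p n m : ℕ) (hp : p.Prime)
    (D : NormalizedModel v p n m)
    (e : ℝ) (he : 0 < e) (hvp : v (p : K) = (e : WithTop ℝ)) :
    ∃ a b : K, a ≠ 0 ∧
      (∑ i ∈ Finset.univ.filter (fun i => 1 < D.k i), (a * D.x i + b)) = 0 ∧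
      (∑ j ∈ Finset.univ.filter (fun j => 1 < D.l j), (a * D.y j + b)) = 1 ∧
      (∀ i j : Fin (n + 1),
        v ((a * D.x i + b) - (a * D.x j + b)) = v (D.x i - D.x j)) ∧
      (∀ i j : Fin (m + 1),
        v ((a * D.y i + b) - (a * D.y j + b)) = v (D.y i - D.y j)) ∧
      ∀ a' b' : K, a' ≠ 0 →
        (∑ i ∈ Finset.univ.filter (fun i => 1 < D.k i), (a' * D.x i + b')) = 0 →
        (∑ j ∈ Finset.univ.filter (fun j => 1 < D.l j), (a' * D.y j + b')) = 1 →
        a' = a ∧ b' = b := by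
  have hvp₀ : 0 < v p := hvp ▸ WithTop.coe_pos.2 he
  have hx : ∀ i ∈ univ.filter (1 < D.k ·), 0 < v (D.x i) := fun i hi =>
    not_not.1 fun h => (mem_filter.1 hi).2.ne' (D.white_exc i h)
  have hy : ∀ j ∈ univ.filter (1 < D.l ·), 0 < v (D.y j - 1) := fun j hj =>
    not_not.1 fun h => (mem_filter.1 hj).2.ne' (D.black_exc j h)
  obtain ⟨a, b, hva, hab⟩ := v.exists_unique_affine_normalization _ _ D.x D.y
    (v.map_card_filter_one_lt_eq_zero hp hvp₀ D.k D.hk_sum (D.white0.imp fun _ => And.right))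
    (v.map_card_filter_one_lt_eq_zero hp hvp₀ D.l D.hl_sum (D.black1.imp fun _ => And.right))
    hx hy
  obtain ⟨hsum₀, hsum₁⟩ := (hab a b).2 ⟨rfl, rfl⟩
  refine ⟨a, b, (v.ne_top_iff).1 (hva ▸ WithTop.zero_ne_top), hsum₀, hsum₁,
    fun i j => v.map_affine_sub_affine hva b _ _, fun i j => v.map_affine_sub_affine hva b _ _,
    fun a' b' _ h₀ h₁ => (hab a' b').1 ⟨h₀, h₁⟩⟩
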